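/- Let Γ_B be the lazy Young graph: level-n vertices are pairs (n,λ) with λ a Young diagram, |λ| ≤ n; (n-1,μ) is joined to (n,λ) iff λ = μ, λ = μ+□, or λ = μ−□. Then the number of paths from the root (0,∅) to (n,λ) equals M(n,|λ|)·f^λ, where M is the array defined by the recursion M(n,n)=1, M(n,l)=0 for l>n, M(1,0)=1, M(n,0)=M(n-1,0)+M(n-1,1), M(n,l)=M(n-1,l-1)+M(n-1,l)+(l+1)·M(n-1,l+1) for 1≤l≤n-1, and f^λ is the number of standard Young tableaux of shape λ. -/

import Mathlib

/-!
`f` satisfies `f λ = ∑_{μ ⋖ λ} f μ`, and the branching rule `∑_{ν ⋗ λ} f ν = (|λ| + 1) f λ`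
follows by induction on `|λ|` from the commutation relation `D U = U D + I` of Young's lattice.
That relation holds because Young's lattice is modular (two distinct diagrams covered by a common
diagram both cover their meet, and dually) and every diagram has exactly one more addable than
removable corner. So if `P n = M n |·| * f` on every level, one lazy step gives
`(M n (l - 1) + M n l + (l + 1) M n (l + 1)) * f` on level `l`, which is the recursion of `M`.
-/

open scoped Classical
open Finset

namespace YoungDiagram

variable {μ ν : YoungDiagram}

theorem card_bot : (⊥ : YoungDiagram).card = 0 := rfl

theorem card_pos (h : μ ≠ ⊥) : 0 < μ.card :=
  Finset.card_lt_card (cells_ssubset_iff.2 (bot_lt_iff_ne_bot.2 h))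

def insertCell (μ : YoungDiagram) (c : ℕ × ℕ) (hc : ∀ d < c, d ∈ μ) : YoungDiagram where
  cells := insert c μ.cells
  isLowerSet := by
    intro x y hyx hx
    simp only [coe_insert, Set.mem_insert_iff, mem_coe, mem_cells] at hx ⊢
    rcases hx with rfl | hx
    · exact (eq_or_lt_of_le hyx).imp id (hc y)
    · exact Or.inr (μ.isLowerSet hyx hx)

def eraseCell (μ : YoungDiagram) (c : ℕ × ℕ) (hc : ∀ d ∈ μ, ¬c < d) : YoungDiagram where
  cells := μ.cells.erase c
  isLowerSet := by
    intro x y hyx hx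
    simp only [coe_erase, Set.mem_sdiff, mem_coe, mem_cells, Set.mem_singleton_iff] at hx ⊢
    refine ⟨μ.isLowerSet hyx hx.1, ?_⟩
    rintro rfl
    exact hc x hx.1 (lt_of_le_of_ne hyx (Ne.symm hx.2))

theorem covBy_of_cells_covBy (h : μ.cells ⋖ ν.cells) : μ ⋖ ν :=
  ⟨cells_ssubset_iff.1 h.lt, fun _ h₁ h₂ => h.2 (cells_ssubset_iff.2 h₁) (cells_ssubset_iff.2 h₂)⟩

theorem covBy_insertCell {c : ℕ × ℕ} (hc : ∀ d < c, d ∈ μ) (hcμ : c ∉ μ) :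
    μ ⋖ μ.insertCell c hc :=
  covBy_of_cells_covBy (Finset.covBy_insert hcμ)

theorem eraseCell_covBy {c : ℕ × ℕ} (hc : ∀ d ∈ μ, ¬c < d) (hcμ : c ∈ μ) :
    μ.eraseCell c hc ⋖ μ :=
  covBy_of_cells_covBy (Finset.erase_covBy hcμ)

/-- Adjoining to `μ` a minimal cell of `ν \ μ` gives a diagram between `μ` and `ν`. -/
theorem cells_covBy_of_covBy (h : μ ⋖ ν) : μ.cells ⋖ ν.cells := by
  obtain ⟨c, hc, hmin⟩ := Finset.exists_minimal (s := ν.cells \ μ.cells)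
    (sdiff_nonempty.2 fun hsub => h.lt.not_ge (cells_subset_iff.1 hsub))
  obtain ⟨hcν, hcμ⟩ := mem_sdiff.1 hc
  have hpred : ∀ d < c, d ∈ μ := fun d hdc => by
    by_contra hdμ
    exact hdc.not_ge (hmin (mem_sdiff.2 ⟨ν.isLowerSet hdc.le hcν, hdμ⟩) hdc.le)
  have hle : μ.insertCell c hpred ≤ ν :=
    cells_subset_iff.1 (insert_subset hcν (cells_subset_iff.2 h.le))
  obtain hν := (h.eq_or_eq (covBy_insertCell hpred hcμ).le hle).resolve_left
    fun heq => (covBy_insertCell hpred hcμ).ne heq.symm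
  rw [← hν]
  exact Finset.covBy_insert hcμ

theorem covBy_iff_cells_covBy : μ ⋖ ν ↔ μ.cells ⋖ ν.cells :=
  ⟨cells_covBy_of_covBy, covBy_of_cells_covBy⟩

theorem covBy_iff_le_and_card : μ ⋖ ν ↔ μ ≤ ν ∧ ν.card = μ.card + 1 := by
  rw [covBy_iff_cells_covBy, Finset.covBy_iff_card_sdiff_eq_one, cells_subset_iff]
  refine and_congr_right fun h => ?_
  rw [card_sdiff_of_subset (cells_subset_iff.2 h)]
  have := Finset.card_le_card (cells_subset_iff.2 h)
  change #ν.cells - #μ.cells = 1 ↔ #ν.cells = #μ.cells + 1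
  omega

theorem card_eq_card_add_one_of_covBy (h : μ ⋖ ν) : ν.card = μ.card + 1 :=
  (covBy_iff_le_and_card.1 h).2

def removableRows (μ : YoungDiagram) : Finset ℕ :=
  (range (μ.colLen 0)).filter fun i => μ.rowLen (i + 1) < μ.rowLen i

/-- Row `0` is always addable, and row `i + 1` is addable exactly when row `i` is removable. -/
def addableRows (μ : YoungDiagram) : Finset ℕ :=
  insert 0 (μ.removableRows.image (· + 1))

theorem mem_removableRows {i : ℕ} : i ∈ μ.removableRows ↔ μ.rowLen (i + 1) < μ.rowLen i := by
  refine mem_filter.trans ⟨And.right, fun h => ⟨mem_range.2 ?_, h⟩⟩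
  exact mem_iff_lt_colLen.1 (mem_iff_lt_rowLen.2 (by omega))

theorem zero_mem_addableRows : 0 ∈ μ.addableRows :=
  mem_insert_self _ _

theorem add_one_mem_addableRows {i : ℕ} :
    i + 1 ∈ μ.addableRows ↔ μ.rowLen (i + 1) < μ.rowLen i := by
  simp [addableRows, mem_removableRows]

theorem card_addableRows : #μ.addableRows = #μ.removableRows + 1 := by
  rw [addableRows, card_insert_of_notMem (by simp),
    card_image_of_injective _ (add_left_injective 1)]

theorem rowLen_notMem (μ : YoungDiagram) (i : ℕ) : (i, μ.rowLen i) ∉ μ := by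
  simp [mem_iff_lt_rowLen]

theorem forall_lt_mem_of_mem_addableRows {i : ℕ} (hi : i ∈ μ.addableRows) :
    ∀ d < (i, μ.rowLen i), d ∈ μ := by
  rintro ⟨p, q⟩ hd
  rw [mem_iff_lt_rowLen]
  rcases Prod.lt_iff.1 hd with ⟨hp, hq⟩ | ⟨hp, hq⟩ <;> dsimp only at hp hq
  · obtain ⟨k, rfl⟩ := Nat.exists_eq_add_of_lt hp
    have := μ.rowLen_anti p (p + k) (by omega)
    have := add_one_mem_addableRows.1 hi
    omega
  · have := μ.rowLen_anti p i hp
    omega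

theorem eq_rowLen_of_forall_lt_mem {a b : ℕ} (hab : (a, b) ∉ μ) (h : ∀ d < (a, b), d ∈ μ) :
    b = μ.rowLen a ∧ a ∈ μ.addableRows := by
  rw [mem_iff_lt_rowLen] at hab
  have hleft : 0 < b → b - 1 < μ.rowLen a := fun hb =>
    mem_iff_lt_rowLen.1 (h _ (Prod.mk_lt_mk_iff_right.2 (by omega)))
  refine ⟨by omega, ?_⟩
  rcases a with _ | k
  · exact zero_mem_addableRows
  · have := mem_iff_lt_rowLen.1 (h (k, b) (Prod.mk_lt_mk_iff_left.2 (by omega)))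
    exact add_one_mem_addableRows.2 (by omega)

theorem forall_not_lt_of_mem_removableRows {i : ℕ} (hi : i ∈ μ.removableRows) :
    ∀ d ∈ μ, ¬(i, μ.rowLen i - 1) < d := by
  rintro ⟨p, q⟩ hd hlt
  rw [mem_iff_lt_rowLen] at hd
  rw [mem_removableRows] at hi
  rcases Prod.lt_iff.1 hlt with ⟨hp, hq⟩ | ⟨hp, hq⟩ <;> dsimp only at hp hq
  · have := μ.rowLen_anti (i + 1) p hp
    omega
  · have := μ.rowLen_anti i p hp
    omega

theorem rowLen_sub_one_mem {i : ℕ} (hi : i ∈ μ.removableRows) : (i, μ.rowLen i - 1) ∈ μ :=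
  mem_iff_lt_rowLen.2 (by have := mem_removableRows.1 hi; omega)

theorem eq_rowLen_sub_one_of_forall_not_lt {a b : ℕ} (hab : (a, b) ∈ μ)
    (h : ∀ d ∈ μ, ¬(a, b) < d) : b = μ.rowLen a - 1 ∧ a ∈ μ.removableRows := by
  rw [mem_iff_lt_rowLen] at hab
  have hright : μ.rowLen a ≤ b + 1 := by
    by_contra! hlt
    exact h _ (mem_iff_lt_rowLen.2 hlt) (Prod.mk_lt_mk_iff_right.2 (by omega))
  have hbelow : μ.rowLen (a + 1) ≤ b := by
    by_contra! hlt
    exact h _ (mem_iff_lt_rowLen.2 hlt) (Prod.mk_lt_mk_iff_left.2 (by omega))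
  exact ⟨by omega, mem_removableRows.2 (by omega)⟩

theorem card_upperCovers {s : Finset YoungDiagram} (hs : ∀ ν, ν ∈ s ↔ μ ⋖ ν) :
    #s = #μ.addableRows := by
  symm
  refine card_bij (fun i hi => μ.insertCell _ (forall_lt_mem_of_mem_addableRows hi))
    (fun i _ => (hs _).2 (covBy_insertCell _ (μ.rowLen_notMem i)))
    (fun i _ j _ hij => ?_) (fun ν hν => ?_)
  · have := (insert_inj fun h => μ.rowLen_notMem i ((mem_cells _).1 h)).1 (congrArg cells hij)
    exact (Prod.mk.inj this).1
  · obtain ⟨⟨a, b⟩, hcμ, hcν⟩ :=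
      Finset.covBy_iff_exists_insert.1 (cells_covBy_of_covBy ((hs ν).1 hν))
    have hpred : ∀ d < (a, b), d ∈ μ := fun d hd => by
      have hdν : d ∈ ν.cells := ν.isLowerSet hd.le (hcν ▸ mem_insert_self _ _)
      rw [← hcν] at hdν
      exact (mem_insert.1 hdν).resolve_left hd.ne
    obtain ⟨rfl, ha⟩ := eq_rowLen_of_forall_lt_mem hcμ hpred
    exact ⟨a, ha, YoungDiagram.ext hcν⟩

theorem card_lowerCovers {s : Finset YoungDiagram} (hs : ∀ κ, κ ∈ s ↔ κ ⋖ μ) :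
    #s = #μ.removableRows := by
  symm
  refine card_bij (fun i hi => μ.eraseCell _ (forall_not_lt_of_mem_removableRows hi))
    (fun i hi => (hs _).2 (eraseCell_covBy _ (rowLen_sub_one_mem hi)))
    (fun i hi j _ hij => ?_) (fun κ hκ => ?_)
  · have := (erase_inj _ ((mem_cells _).2 (rowLen_sub_one_mem hi))).1 (congrArg cells hij)
    exact (Prod.mk.inj this).1
  · obtain ⟨⟨a, b⟩, hcμ, hcκ⟩ :=
      Finset.covBy_iff_exists_erase.1 (cells_covBy_of_covBy ((hs κ).1 hκ))
    have hmax : ∀ d ∈ μ, ¬(a, b) < d := fun d hdμ hd => by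
      have hdκ : d ∈ κ.cells := hcκ ▸ mem_erase.2 ⟨hd.ne', hdμ⟩
      have hcκ' : (a, b) ∈ κ.cells := κ.isLowerSet hd.le hdκ
      rw [← hcκ] at hcκ'
      exact (mem_erase.1 hcκ').1 rfl
    obtain ⟨rfl, ha⟩ := eq_rowLen_sub_one_of_forall_not_lt hcμ hmax
    exact ⟨a, ha, YoungDiagram.ext hcκ⟩

theorem card_upperCovers_eq_card_lowerCovers_add_one {s t : Finset YoungDiagram}
    (hs : ∀ ν, ν ∈ s ↔ μ ⋖ ν) (ht : ∀ κ, κ ∈ t ↔ κ ⋖ μ) : #s = #t + 1 := by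
  rw [card_upperCovers hs, card_lowerCovers ht, card_addableRows]

end YoungDiagram

section ModularLattice

variable {α M : Type*} [Lattice α] [IsModularLattice α] [AddCommMonoid M]
  {down up : α → Finset α} (hdown : ∀ b a, a ∈ down b ↔ a ⋖ b) (hup : ∀ a b, b ∈ up a ↔ a ⋖ b)
include hdown hup

/-- By modularity, `y ↦ x ⊓ z` and `w ↦ x ⊔ z` are inverse bijections between the up-down and
the down-up paths from `x` to `z ≠ x`. -/
theorem sum_up_sum_down_erase_eq [DecidableEq α] (x : α) (g : α → M) :
    ∑ y ∈ up x, ∑ z ∈ (down y).erase x, g z = ∑ w ∈ down x, ∑ z ∈ (up w).erase x, g z := by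
  simp only [sum_sigma']
  refine sum_nbij' (fun p => ⟨x ⊓ p.2, p.2⟩) (fun p => ⟨x ⊔ p.2, p.2⟩) ?_ ?_ ?_ ?_ fun _ _ => rfl
  all_goals
    rintro ⟨y, z⟩ hp
    simp only [mem_sigma, mem_erase, hdown, hup] at hp
    obtain ⟨hxy, hzx, hzy⟩ := hp
  · have hsup : x ⊔ z = y := hxy.wcovBy.sup_eq hzy.wcovBy hzx.symm
    simp only [mem_sigma, mem_erase, hdown, hup, hzx, ne_eq, not_false_eq_true, true_and]
    exact ⟨inf_covBy_of_covBy_sup_right (hsup ▸ hzy), inf_covBy_of_covBy_sup_left (hsup ▸ hxy)⟩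
  · have hinf : x ⊓ z = y := hxy.wcovBy.inf_eq hzy.wcovBy hzx.symm
    simp only [mem_sigma, mem_erase, hdown, hup, hzx, ne_eq, not_false_eq_true, true_and]
    exact ⟨covBy_sup_of_inf_covBy_right (hinf ▸ hzy), covBy_sup_of_inf_covBy_left (hinf ▸ hxy)⟩
  · simp [hxy.wcovBy.sup_eq hzy.wcovBy hzx.symm]
  · simp [hxy.wcovBy.inf_eq hzy.wcovBy hzx.symm]

/-- The relation `D U = U D + I` of a 1-differential poset. -/
theorem sum_up_sum_down_eq_sum_down_sum_up_add (hcard : ∀ a, #(up a) = #(down a) + 1)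
    (x : α) (g : α → M) :
    ∑ y ∈ up x, ∑ z ∈ down y, g z = ∑ w ∈ down x, ∑ z ∈ up w, g z + g x := by
  classical
  have hsplit_up : ∑ y ∈ up x, ∑ z ∈ down y, g z =
      #(up x) • g x + ∑ y ∈ up x, ∑ z ∈ (down y).erase x, g z := by
    rw [← sum_const, ← sum_add_distrib]
    exact sum_congr rfl fun y hy => (add_sum_erase _ _ ((hdown y x).2 ((hup x y).1 hy))).symm
  have hsplit_down : ∑ w ∈ down x, ∑ z ∈ up w, g z =
      #(down x) • g x + ∑ w ∈ down x, ∑ z ∈ (up w).erase x, g z := by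
    rw [← sum_const, ← sum_add_distrib]
    exact sum_congr rfl fun w hw => (add_sum_erase _ _ ((hup w x).2 ((hdown x w).1 hw))).symm
  rw [hsplit_up, hsplit_down, sum_up_sum_down_erase_eq hdown hup, hcard, succ_nsmul]
  abel

end ModularLattice

section YoungLattice

variable {M : Type*} [AddCommMonoid M] {below above : YoungDiagram → Finset YoungDiagram}
  (hbelow : ∀ ν μ, μ ∈ below ν ↔ μ ⋖ ν) (habove : ∀ μ ν, ν ∈ above μ ↔ μ ⋖ ν)
include hbelow habove

theorem sum_above_eq_card_add_one_smul {f : YoungDiagram → M}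
    (hf : ∀ ν, ν ≠ ⊥ → f ν = ∑ μ ∈ below ν, f μ) (lam : YoungDiagram) :
    ∑ ν ∈ above lam, f ν = (lam.card + 1) • f lam := by
  have hcard (μ : YoungDiagram) : #(above μ) = #(below μ) + 1 :=
    YoungDiagram.card_upperCovers_eq_card_lowerCovers_add_one (habove μ) (hbelow μ)
  induction hn : lam.card using Nat.strong_induction_on generalizing lam with
  | _ n ih =>
    calc ∑ ν ∈ above lam, f ν
        = ∑ ν ∈ above lam, ∑ μ ∈ below ν, f μ :=
          sum_congr rfl fun ν hν => hf ν ((habove lam ν).1 hν).lt.ne_bot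
      _ = ∑ κ ∈ below lam, ∑ μ ∈ above κ, f μ + f lam :=
          sum_up_sum_down_eq_sum_down_sum_up_add hbelow habove hcard lam f
      _ = ∑ κ ∈ below lam, n • f κ + f lam := by
          congr 1
          refine sum_congr rfl fun κ hκ => ?_
          have hκlam := YoungDiagram.card_eq_card_add_one_of_covBy ((hbelow lam κ).1 hκ)
          rw [ih κ.card (by omega) κ rfl]
          congr 1
          omega
      _ = (n + 1) • f lam := by
          rw [← smul_sum, succ_nsmul]
          rcases eq_or_ne lam ⊥ with rfl | hlam
          · rw [← hn, YoungDiagram.card_bot, zero_smul, zero_smul]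
          · rw [← hf lam hlam]

end YoungLattice

theorem rookBrauer_succ {M : ℕ → ℕ → ℕ} (hdiag : ∀ n, M n n = 1)
    (hzero : ∀ n l, n < l → M n l = 0)
    (hrec : ∀ n l, 1 ≤ n → 1 ≤ l → l ≤ n - 1 →
      M n l = M (n - 1) (l - 1) + M (n - 1) l + (l + 1) * M (n - 1) (l + 1))
    (n c : ℕ) (hc : 1 ≤ c) :
    M (n + 1) c = M n (c - 1) + M n c + (c + 1) * M n (c + 1) := by
  rcases lt_trichotomy c (n + 1) with hlt | rfl | hgt
  · simpa using hrec (n + 1) c (by omega) hc (by omega)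
  · rw [hdiag, add_tsub_cancel_right, hdiag, hzero n (n + 1) (by omega),
      hzero n (n + 1 + 1) (by omega), mul_zero, add_zero]
  · rw [hzero (n + 1) c hgt, hzero n (c - 1) (by omega), hzero n c (by omega),
      hzero n (c + 1) (by omega), mul_zero, add_zero]

theorem stmt16_general
    (below above : YoungDiagram → Finset YoungDiagram)
    (hbelow : ∀ ν μ, μ ∈ below ν ↔ μ ≤ ν ∧ ν.card = μ.card + 1)
    (habove : ∀ μ ν, ν ∈ above μ ↔ μ ≤ ν ∧ ν.card = μ.card + 1)
    (f : YoungDiagram → ℕ)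
    (hf0 : f ⊥ = 1)
    (hf : ∀ ν, ν ≠ ⊥ → f ν = ∑ μ ∈ below ν, f μ)
    -- `P n l` : number of paths from the root `(0, ⊥)` to `(n, l)` in `Γ_B`
    (P : ℕ → YoungDiagram → ℕ)
    (hP0 : ∀ l : YoungDiagram, P 0 l = if l = ⊥ then 1 else 0)
    (hPrec : ∀ n (l : YoungDiagram), P (n + 1) l =
      P n l + (∑ η ∈ below l, P n η) + ∑ μ ∈ above l, P n μ)
    (M : ℕ → ℕ → ℕ)
    (hdiag : ∀ n, M n n = 1)
    (hzero : ∀ n l, n < l → M n l = 0)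
    (hrec0 : ∀ n, 1 ≤ n → M n 0 = M (n - 1) 0 + M (n - 1) 1)
    (hrec : ∀ n l, 1 ≤ n → 1 ≤ l → l ≤ n - 1 →
      M n l = M (n - 1) (l - 1) + M (n - 1) l + (l + 1) * M (n - 1) (l + 1)) :
    ∀ n (l : YoungDiagram), l.card ≤ n → P n l = M n l.card * f l := by
  have hbelow' (ν μ : YoungDiagram) : μ ∈ below ν ↔ μ ⋖ ν :=
    (hbelow ν μ).trans YoungDiagram.covBy_iff_le_and_card.symm
  have habove' (μ ν : YoungDiagram) : ν ∈ above μ ↔ μ ⋖ ν :=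
    (habove μ ν).trans YoungDiagram.covBy_iff_le_and_card.symm
  suffices ∀ n l, P n l = M n l.card * f l from fun n l _ => this n l
  intro n
  induction n with
  | zero =>
    intro l
    rcases eq_or_ne l ⊥ with rfl | hl
    · rw [hP0, if_pos rfl, YoungDiagram.card_bot, hdiag, hf0]
    · rw [hP0, if_neg hl, hzero 0 _ (YoungDiagram.card_pos hl), zero_mul]
  | succ n ih =>
    intro l
    have hsum_below : ∑ η ∈ below l, P n η = M n (l.card - 1) * ∑ η ∈ below l, f η := by
      rw [mul_sum]
      refine sum_congr rfl fun η hη => ?_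
      rw [ih, YoungDiagram.card_eq_card_add_one_of_covBy ((hbelow' l η).1 hη),
        add_tsub_cancel_right]
    have hsum_above : ∑ ν ∈ above l, P n ν = M n (l.card + 1) * ((l.card + 1) * f l) := by
      rw [← smul_eq_mul (l.card + 1), ← sum_above_eq_card_add_one_smul hbelow' habove' hf,
        mul_sum]
      refine sum_congr rfl fun ν hν => ?_
      rw [ih, YoungDiagram.card_eq_card_add_one_of_covBy ((habove' l ν).1 hν)]
    rw [hPrec, ih, hsum_below, hsum_above]
    rcases eq_or_ne l ⊥ with rfl | hl
    · have hbot : below ⊥ = ∅ :=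
        eq_empty_of_forall_notMem fun κ hκ => not_lt_bot ((hbelow' ⊥ κ).1 hκ).lt
      rw [hbot, sum_empty, YoungDiagram.card_bot, hrec0 (n + 1) le_add_self,
        add_tsub_cancel_right, hf0]
      ring
    · rw [← hf l hl, rookBrauer_succ hdiag hzero hrec n _ (YoungDiagram.card_pos hl)]
      ring

/-- In the lazy Young graph `Γ_B` (at each step one may add a box, remove a
box or stay), the number of paths from the root `(0, ∅)` to `(n, λ)` equals
`M n |λ| * f λ`, where `M` is the rook-Brauer array and `f λ` is the number of
standard Young tableaux of shape `λ`. -/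
theorem stmt16
    (below above : YoungDiagram → Finset YoungDiagram)
    (hbelow : ∀ ν μ, μ ∈ below ν ↔ μ ≤ ν ∧ ν.card = μ.card + 1)
    (habove : ∀ μ ν, ν ∈ above μ ↔ μ ≤ ν ∧ ν.card = μ.card + 1)
    (f : YoungDiagram → ℕ)
    (hf0 : f ⊥ = 1)
    (hf : ∀ ν, ν ≠ ⊥ → f ν = ∑ μ ∈ below ν, f μ)
    -- `P n l` : number of paths from the root `(0, ⊥)` to `(n, l)` in `Γ_B`
    (P : ℕ → YoungDiagram → ℕ)
    (hP0 : ∀ l : YoungDiagram, P 0 l = if l = ⊥ then 1 else 0)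
    (hPrec : ∀ n (l : YoungDiagram), P (n + 1) l =
      P n l + (∑ η ∈ below l, P n η) + ∑ μ ∈ above l, P n μ)
    (M : ℕ → ℕ → ℕ)
    (hdiag : ∀ n, M n n = 1)
    (hzero : ∀ n l, n < l → M n l = 0)
    (h10 : M 1 0 = 1)
    (hrec0 : ∀ n, 1 ≤ n → M n 0 = M (n - 1) 0 + M (n - 1) 1)
    (hrec : ∀ n l, 1 ≤ n → 1 ≤ l → l ≤ n - 1 →
      M n l = M (n - 1) (l - 1) + M (n - 1) l + (l + 1) * M (n - 1) (l + 1)) :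
    ∀ n (l : YoungDiagram), l.card ≤ n → P n l = M n l.card * f l :=
  stmt16_general below above hbelow habove f hf0 hf P hP0 hPrec M hdiag hzero hrec0 hrec
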